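/- For p, q, r ∈ ℂ and t ∈ ℂ with t ≠ 0: if L and L′ are complex Lie algebras admitting bases realizing the bracket patterns d₅(p,q,r) and d₅(tp,tq,tr) respectively, then L and L′ are isomorphic as Lie algebras over ℂ. -/

import Mathlib

/-! Give `e₁, …, e₅` the weights `2, 1, 0, 1, 2`. Every structure constant of `d₅(p,q,r)` in
`⁅eᵢ, eⱼ⁆ = ∑ₖ cᵢⱼₖ eₖ` is homogeneous in `(p, q, r)` of degree `wᵢ + wⱼ − wₖ`, so rescaling the
basis by `eᵢ ↦ t^{-wᵢ} eᵢ` turns the pattern `d₅(p,q,r)` into `d₅(tp,tq,tr)`. -/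

/-- `Realizes L c` means that the complex Lie algebra `L` admits a basis `e₁, …, e₅`
(indexed by `Fin 5`) in which the brackets of basis vectors are given by the
structure constants `c`, i.e. `⁅eᵢ, eⱼ⁆ = ∑ₖ c i j k • eₖ` for all `i < j`
(the remaining brackets being determined by antisymmetry). -/
def Realizes (L : Type) [LieRing L] [LieAlgebra ℂ L]
    (c : Fin 5 → Fin 5 → Fin 5 → ℂ) : Prop :=
  ∃ e : Module.Basis (Fin 5) ℂ L, ∀ i j : Fin 5, i < j →
    ⁅e i, e j⁆ = ∑ k, c i j k • e k

/-- The bracket pattern `d₅(p,q,r)`: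
`[e₂,e₄] = e₁ + p·e₂`, `[e₃,e₄] = e₂ + q·e₃`, `[e₁,e₅] = p(q−r)·e₁`,
`[e₂,e₅] = (r−q)·e₁`, `[e₃,e₅] = e₁ + r·e₂ − r(p−q)·e₃`, all other brackets zero
(indices shifted down by one since `Fin 5` starts at `0`). -/
def d5 (p q r : ℂ) : Fin 5 → Fin 5 → Fin 5 → ℂ := fun i j =>
  if i = 1 ∧ j = 3 then ![1, p, 0, 0, 0]
  else if i = 2 ∧ j = 3 then ![0, 1, q, 0, 0]
  else if i = 0 ∧ j = 4 then ![p * (q - r), 0, 0, 0, 0]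
  else if i = 1 ∧ j = 4 then ![r - q, 0, 0, 0, 0]
  else if i = 2 ∧ j = 4 then ![1, r, -(r * (p - q)), 0, 0]
  else 0

section BasisRescaling

variable {R L L' ι : Type*} [CommRing R] [LieRing L] [LieAlgebra R L] [LieRing L'] [LieAlgebra R L']
  [LinearOrder ι]

theorem LinearMap.map_lie_of_basis_of_lt (b : Module.Basis ι R L) (φ : L →ₗ[R] L')
    (h : ∀ i j, i < j → φ ⁅b i, b j⁆ = ⁅φ (b i), φ (b j)⁆) (x y : L) :
    φ ⁅x, y⁆ = ⁅φ x, φ y⁆ := by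
  have h_all : ∀ i j, φ ⁅b i, b j⁆ = ⁅φ (b i), φ (b j)⁆ := by
    intro i j
    rcases lt_trichotomy i j with hij | rfl | hij
    · exact h i j hij
    · simp only [lie_self, map_zero]
    · rw [← lie_skew, map_neg, h j i hij, lie_skew]
  have := LinearMap.ext_basis (B := (LieAlgebra.ad R L : L →ₗ[R] Module.End R L).compr₂ φ)
    (B' := (LieAlgebra.ad R L' : L' →ₗ[R] Module.End R L').compl₁₂ φ φ) b b h_all
  exact congr($this x y)

theorem nonempty_lieEquiv_of_rescaled_structure_constants [Fintype ι]
    (b : Module.Basis ι R L) (b' : Module.Basis ι R L') {c c' : ι → ι → ι → R}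
    (hb : ∀ i j, i < j → ⁅b i, b j⁆ = ∑ k, c i j k • b k)
    (hb' : ∀ i j, i < j → ⁅b' i, b' j⁆ = ∑ k, c' i j k • b' k) (d : ι → Rˣ)
    (hd : ∀ i j k, i < j → c i j k * d k = d i * d j * c' i j k) :
    Nonempty (L ≃ₗ⁅R⁆ L') := by
  let φ := b.equiv (b'.unitsSMul d) (Equiv.refl ι)
  have hφ (i : ι) : φ (b i) = (d i : R) • b' i := by
    simp [φ, Module.Basis.equiv_apply, Module.Basis.unitsSMul_apply, Units.smul_def]
  refine ⟨{ φ with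
    map_lie' := φ.toLinearMap.map_lie_of_basis_of_lt b (fun i j hij => ?_) _ _ }⟩
  simp only [LinearEquiv.coe_coe, hφ, hb i j hij, hb' i j hij, map_sum, map_smul, smul_lie,
    lie_smul, Finset.smul_sum, smul_smul, hd i j _ hij, mul_assoc, mul_left_comm]

end BasisRescaling

def d5Weight : Fin 5 → ℕ := ![2, 1, 0, 1, 2]

theorem d5_mul_inv_pow_weight (p q r : ℂ) {t : ℂ} (ht : t ≠ 0) (i j k : Fin 5) :
    d5 p q r i j k * t⁻¹ ^ d5Weight k =
      t⁻¹ ^ d5Weight i * t⁻¹ ^ d5Weight j * d5 (t * p) (t * q) (t * r) i j k := by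
  fin_cases i <;> fin_cases j <;> fin_cases k <;> simp [d5, d5Weight] <;> field_simp

/-- For `t ≠ 0`, Lie algebras realizing the patterns `d₅(p,q,r)` and
`d₅(tp,tq,tr)` are isomorphic. -/
theorem d5_projective (p q r t : ℂ) (ht : t ≠ 0)
    (L L' : Type) [LieRing L] [LieAlgebra ℂ L] [LieRing L'] [LieAlgebra ℂ L']
    (hL : Realizes L (d5 p q r)) (hL' : Realizes L' (d5 (t * p) (t * q) (t * r))) :
    Nonempty (L ≃ₗ⁅ℂ⁆ L') := by
  obtain ⟨b, hb⟩ := hL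
  obtain ⟨b', hb'⟩ := hL'
  refine nonempty_lieEquiv_of_rescaled_structure_constants b b' hb hb'
    (fun i => (Units.mk0 t ht)⁻¹ ^ d5Weight i) fun i j k _ => ?_
  simpa using d5_mul_inv_pow_weight p q r ht i j k
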